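/- arXiv:1105.3816 — 12 statements merged into one kernel-verified Lean document; each statement's English description precedes it below -/
import Mathlib

section
/- Let f1 and f3 be two balanced columns of length n with q levels each (each level appearing n/q times), with induced matrices X1 and X3 (the n×q 0-1 matrices whose (s,t) entry is 1 iff the s-th entry of the column equals t-1). Then f1 and f3 are fully aliased (i.e., f1 can be obtained from f3 by a permutation of the q levels) if and only if X1·X1ᵀ = X3·X3ᵀ. -/
open Finset Matrix

/-- two balanced `q`-level columns of length `n` are fully aliased
(one is obtained from the other by a permutation of the levels) iff their
induced matrices `X1`, `X3` satisfy `X1 * X1ᵀ = X3 * X3ᵀ`. -/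
theorem fully_aliased_iff_induced_gram_eq {n q : ℕ}
    (f1 f3 : Fin n → Fin q)
    (hb1 : ∀ a : Fin q, (Finset.univ.filter fun s => f1 s = a).card = n / q)
    (hb3 : ∀ a : Fin q, (Finset.univ.filter fun s => f3 s = a).card = n / q)
    (X1 X3 : Matrix (Fin n) (Fin q) ℚ)
    (hX1 : ∀ s t, X1 s t = if f1 s = t then 1 else 0)
    (hX3 : ∀ s t, X3 s t = if f3 s = t then 1 else 0) :
    (∃ σ : Equiv.Perm (Fin q), ∀ s, f1 s = σ (f3 s)) ↔ X1 * X1ᵀ = X3 * X3ᵀ := by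
  have key : ∀ (f : Fin n → Fin q) (X : Matrix (Fin n) (Fin q) ℚ),
      (∀ s t, X s t = if f s = t then 1 else 0) →
      ∀ s s', (X * Xᵀ) s s' = if f s = f s' then 1 else 0 := by
    intro f X hX s s'
    simp only [Matrix.mul_apply, Matrix.transpose_apply, hX]
    have h1 : ∀ t : Fin q, (if f s = t then (1:ℚ) else 0) * (if f s' = t then 1 else 0)
        = if t = f s ∧ f s = f s' then 1 else 0 := by
      intro t
      by_cases h : f s = t <;> by_cases h' : f s' = t <;>
        simp_all [eq_comm] <;> aesop
    simp only [h1, Finset.sum_ite_eq, Finset.mem_univ, if_true]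
    by_cases h : f s = f s' <;> simp [h]
  have hgram : (X1 * X1ᵀ = X3 * X3ᵀ) ↔ ∀ s s', (f1 s = f1 s' ↔ f3 s = f3 s') := by
    constructor
    · intro h s s'
      have := congrFun (congrFun h s) s'
      rw [key f1 X1 hX1, key f3 X3 hX3] at this
      by_cases h1 : f1 s = f1 s' <;> by_cases h3 : f3 s = f3 s' <;>
        simp_all
    · intro h
      ext s s'
      rw [key f1 X1 hX1, key f3 X3 hX3]
      by_cases h1 : f1 s = f1 s' <;> simp_all [(h s s')]
  rw [hgram]
  constructor
  · rintro ⟨σ, hσ⟩ s s'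
    rw [hσ s, hσ s']
    exact ⟨fun h => σ.injective h, fun h => congrArg σ h⟩
  · intro h
    rcases Nat.eq_zero_or_pos n with hn | hn
    · refine ⟨1, fun s => ?_⟩
      exact absurd s.2 (by omega)
    · -- f3 is surjective since each fiber has card n/q ≥ 1
      obtain ⟨s0⟩ : Nonempty (Fin n) := ⟨⟨0, hn⟩⟩
      have hpos : 0 < n / q := by
        have := hb3 (f3 s0)
        have hmem : s0 ∈ Finset.univ.filter fun s => f3 s = f3 s0 := by simp
        have := Finset.card_pos.mpr ⟨s0, hmem⟩
        omega
      have hsurj : ∀ a : Fin q, ∃ s, f3 s = a := by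
        intro a
        have := hb3 a
        have : (Finset.univ.filter fun s => f3 s = a).Nonempty := by
          rw [← Finset.card_pos]; omega
        obtain ⟨s, hs⟩ := this
        exact ⟨s, (Finset.mem_filter.mp hs).2⟩
      choose rep hrep using hsurj
      set g : Fin q → Fin q := fun a => f1 (rep a) with hg
      have ginj : Function.Injective g := by
        intro a b hab
        have : f3 (rep a) = f3 (rep b) := (h (rep a) (rep b)).mp hab
        rw [hrep a, hrep b] at this
        exact this
      have gbij : Function.Bijective g := Finite.injective_iff_bijective.mp ginj
      refine ⟨Equiv.ofBijective g gbij, fun s => ?_⟩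
      have : f3 (rep (f3 s)) = f3 s := hrep (f3 s)
      have := (h (rep (f3 s)) s).mpr this
      simpa [Equiv.ofBijective, hg] using this.symm
end

section
/- Let f1 be a column of length n1 with entries in the abelian group A = Z/q and induced matrix X1, and let f2 be a column of length n2 with entries in A and induced matrix X2. Then the induced matrix of the Kronecker sum f1 ⊕_A f2 (the column of length n1·n2 whose ((i-1)n2+j)-th entry is f1_i + f2_j in A) equals (X1 ⊗ X2)·P, where P is the q²×q 0-1 matrix formed by stacking the permutation matrices P_0,...,P_{q-1}, and P_i is the permutation matrix representing addition of i in A, i.e., the row vector (0,...,q-1)·P_iᵀ = (i+0, i+1, ..., i+(q-1)) (addition in A). -/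
open Finset Matrix Kronecker

/-- the induced matrix of the Kronecker sum `f1 ⊕_A f2` over
`A = ZMod q` equals `(X1 ⊗ₖ X2) * P`, where `P` stacks the permutation
matrices `P_i` of addition by `i` in `A`. -/
theorem induced_matrix_of_kronecker_sum {n1 n2 q : ℕ} [NeZero q]
    (f1 : Fin n1 → ZMod q) (f2 : Fin n2 → ZMod q)
    (X1 : Matrix (Fin n1) (ZMod q) ℚ) (X2 : Matrix (Fin n2) (ZMod q) ℚ)
    (hX1 : ∀ s t, X1 s t = if f1 s = t then 1 else 0)
    (hX2 : ∀ s t, X2 s t = if f2 s = t then 1 else 0)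
    (Y : Matrix (Fin n1 × Fin n2) (ZMod q) ℚ)
    (hY : ∀ s t, Y s t = if f1 s.1 + f2 s.2 = t then 1 else 0)
    (P : Matrix (ZMod q × ZMod q) (ZMod q) ℚ)
    (hP : ∀ i j t, P (i, j) t = if t = i + j then 1 else 0) :
    Y = (X1 ⊗ₖ X2) * P := by
  ext s t
  rw [hY, Matrix.mul_apply]
  rw [Finset.sum_eq_single (f1 s.1, f2 s.2)]
  · simp [Matrix.kroneckerMap_apply, hX1, hX2, hP, eq_comm]
  · rintro ⟨i, j⟩ _ hne
    simp only [Matrix.kroneckerMap_apply, hX1, hX2]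
    rcases eq_or_ne (f1 s.1) i with h1 | h1
    · rcases eq_or_ne (f2 s.2) j with h2 | h2
      · exact absurd (by rw [← h1, ← h2]) hne
      · simp [h2]
    · simp [h1]
  · simp
end

section
/- Let f1, f3 be balanced columns of length n1 with q1 and q3 levels respectively, and f2, f4 balanced columns of length n2 with q2 and q4 levels respectively. Define h1 of length n1·n2 by h1_{(i,j)} = q2·f1_i + f2_j (taking q1·q2 levels) and h2 by h2_{(i,j)} = q4·f3_i + f4_j (taking q3·q4 levels). Then h1 and h2 are fully aliased if and only if f1 is fully aliased with f3 and f2 is fully aliased with f4. -/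
open Finset

def mixLevel {q1 q2 : ℕ} (a : Fin q1) (b : Fin q2) : Fin (q1 * q2) :=
  ⟨q2 * a.val + b.val, by
    have hb : b.val < q2 := b.isLt
    have ha : a.val + 1 ≤ q1 := a.isLt
    calc q2 * a.val + b.val < q2 * a.val + q2 := by omega
      _ = q2 * (a.val + 1) := by ring
      _ ≤ q2 * q1 := Nat.mul_le_mul_left q2 ha
      _ = q1 * q2 := Nat.mul_comm q2 q1⟩

/-- Two columns (possibly with different level sets) are fully aliased if one
arises from the other by a bijective relabeling of levels. -/
def FullyAliased {I α β : Type*} (f : I → α) (g : I → β) : Prop :=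
  ∃ σ : β ≃ α, ∀ s, f s = σ (g s)

lemma mixLevel_injective {q1 q2 : ℕ} :
    Function.Injective (fun p : Fin q1 × Fin q2 => mixLevel p.1 p.2) := by
  rintro ⟨a, b⟩ ⟨a', b'⟩ h
  simp only [mixLevel, Fin.mk.injEq] at h
  have hb : b.val < q2 := b.isLt
  have hb' : b'.val < q2 := b'.isLt
  have hq2 : 0 < q2 := b.pos
  have ha : a.val = a'.val := by
    have h1 : (q2 * a.val + b.val) / q2 = a.val := by
      rw [Nat.mul_add_div hq2, Nat.div_eq_of_lt hb, Nat.add_zero]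
    have h2 : (q2 * a'.val + b'.val) / q2 = a'.val := by
      rw [Nat.mul_add_div hq2, Nat.div_eq_of_lt hb', Nat.add_zero]
    rw [← h1, ← h2, h]
  have hbv : b.val = b'.val := by
    rw [ha] at h; omega
  simp [Prod.ext_iff, Fin.ext_iff, ha, hbv]

noncomputable def mixEquiv (q1 q2 : ℕ) : Fin q1 × Fin q2 ≃ Fin (q1 * q2) :=
  Equiv.ofBijective (fun p : Fin q1 × Fin q2 => mixLevel p.1 p.2)
    ((Fintype.bijective_iff_injective_and_card _).2
      ⟨mixLevel_injective, by simp⟩)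

@[simp] lemma mixEquiv_apply {q1 q2 : ℕ} (a : Fin q1) (b : Fin q2) :
    mixEquiv q1 q2 (a, b) = mixLevel a b := rfl

lemma surj_of_balanced {n q : ℕ} (hn : 0 < n) (f : Fin n → Fin q)
    (hb : ∀ a : Fin q, (Finset.univ.filter fun s => f s = a).card = n / q) :
    Function.Surjective f := by
  intro a
  have hq : 0 < q := a.pos
  have hsum : (Finset.univ : Finset (Fin n)).card =
      ∑ b : Fin q, ((Finset.univ : Finset (Fin n)).filter fun s => f s = b).card :=
    Finset.card_eq_sum_card_fiberwise (fun x _ => Finset.mem_univ (f x))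
  simp only [hb, Finset.card_univ, Fintype.card_fin, Finset.sum_const,
    smul_eq_mul] at hsum
  have hpos : 0 < n / q := by
    rcases Nat.eq_zero_or_pos (n / q) with h0 | h
    · rw [h0, Nat.mul_zero] at hsum; omega
    · exact h
  have hcard : 0 < ((Finset.univ : Finset (Fin n)).filter fun s => f s = a).card := by
    rw [hb a]; exact hpos
  obtain ⟨s, hs⟩ := Finset.card_pos.mp hcard
  exact ⟨s, (Finset.mem_filter.mp hs).2⟩

/-- the mixed columns `h1 (i,j) = q2·f1 i + f2 j` and
`h2 (i,j) = q4·f3 i + f4 j` are fully aliased iff `f1` is fully aliased with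
`f3` and `f2` is fully aliased with `f4` (all columns balanced). -/
theorem mixed_columns_fully_aliased_iff {n1 n2 q1 q2 q3 q4 : ℕ}
    (hn1 : 0 < n1) (hn2 : 0 < n2)
    (f1 : Fin n1 → Fin q1) (f3 : Fin n1 → Fin q3)
    (f2 : Fin n2 → Fin q2) (f4 : Fin n2 → Fin q4)
    (hb1 : ∀ a : Fin q1, (Finset.univ.filter fun s => f1 s = a).card = n1 / q1)
    (hb3 : ∀ a : Fin q3, (Finset.univ.filter fun s => f3 s = a).card = n1 / q3)
    (hb2 : ∀ a : Fin q2, (Finset.univ.filter fun s => f2 s = a).card = n2 / q2)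
    (hb4 : ∀ a : Fin q4, (Finset.univ.filter fun s => f4 s = a).card = n2 / q4) :
    FullyAliased (fun s : Fin n1 × Fin n2 => mixLevel (f1 s.1) (f2 s.2))
        (fun s : Fin n1 × Fin n2 => mixLevel (f3 s.1) (f4 s.2))
      ↔ FullyAliased f1 f3 ∧ FullyAliased f2 f4 := by
  constructor
  · rintro ⟨σ, hσ⟩
    have hs1 := surj_of_balanced hn1 f1 hb1
    have hs2 := surj_of_balanced hn2 f2 hb2
    have hs3 := surj_of_balanced hn1 f3 hb3
    have hs4 := surj_of_balanced hn2 f4 hb4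
    set σ' : Fin q3 × Fin q4 ≃ Fin q1 × Fin q2 :=
      (mixEquiv q3 q4).trans (σ.trans (mixEquiv q1 q2).symm) with hσ'def
    have key : ∀ (i : Fin n1) (j : Fin n2), σ' (f3 i, f4 j) = (f1 i, f2 j) := by
      intro i j
      have := hσ (i, j)
      simp only [hσ'def, Equiv.trans_apply, mixEquiv_apply]
      rw [← this]
      exact (mixEquiv q1 q2).symm_apply_apply (f1 i, f2 j)
    obtain ⟨i0, -⟩ := hs3 (f3 ⟨0, hn1⟩)
    obtain ⟨j0, -⟩ := hs4 (f4 ⟨0, hn2⟩)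
    set a0 := f3 i0
    set b0 := f4 j0
    set F : Fin q3 → Fin q1 := fun a => (σ' (a, b0)).1 with hF
    set G : Fin q4 → Fin q2 := fun b => (σ' (a0, b)).2 with hG
    have key' : ∀ (a : Fin q3) (b : Fin q4), σ' (a, b) = (F a, G b) := by
      intro a b
      obtain ⟨i, hi⟩ := hs3 a
      obtain ⟨j, hj⟩ := hs4 b
      have h1 : σ' (a, b) = (f1 i, f2 j) := by rw [← hi, ← hj]; exact key i j
      have h2 : F a = f1 i := by
        simp only [hF]
        rw [← hi]
        have := key i j0
        rw [this]
      have h3 : G b = f2 j := by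
        simp only [hG]
        rw [← hj]
        have := key i0 j
        rw [this]
      rw [h1, h2, h3]
    have hFf : ∀ i : Fin n1, F (f3 i) = f1 i := by
      intro i
      have := key i j0
      simp only [hF]
      rw [this]
    have hGf : ∀ j : Fin n2, G (f4 j) = f2 j := by
      intro j
      have := key i0 j
      simp only [hG]
      rw [this]
    have hFbij : Function.Bijective F := by
      constructor
      · intro a a' h
        have : σ' (a, b0) = σ' (a', b0) := by
          rw [key' a b0, key' a' b0, h]
        exact (Prod.ext_iff.mp (σ'.injective this)).1
      · intro c
        obtain ⟨i, hi⟩ := hs1 c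
        exact ⟨f3 i, by rw [hFf i, hi]⟩
    have hGbij : Function.Bijective G := by
      constructor
      · intro b b' h
        have : σ' (a0, b) = σ' (a0, b') := by
          rw [key' a0 b, key' a0 b', h]
        exact (Prod.ext_iff.mp (σ'.injective this)).2
      · intro c
        obtain ⟨j, hj⟩ := hs2 c
        exact ⟨f4 j, by rw [hGf j, hj]⟩
    exact ⟨⟨Equiv.ofBijective F hFbij, fun s => (hFf s).symm⟩,
      ⟨Equiv.ofBijective G hGbij, fun s => (hGf s).symm⟩⟩
  · rintro ⟨⟨σ1, h1⟩, ⟨σ2, h2⟩⟩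
    refine ⟨(mixEquiv q3 q4).symm.trans ((Equiv.prodCongr σ1 σ2).trans (mixEquiv q1 q2)), ?_⟩
    intro s
    show mixLevel (f1 s.1) (f2 s.2) =
      ((mixEquiv q3 q4).symm.trans ((σ1.prodCongr σ2).trans (mixEquiv q1 q2)))
        (mixEquiv q3 q4 (f3 s.1, f4 s.2))
    rw [Equiv.trans_apply, Equiv.trans_apply, Equiv.symm_apply_apply,
      Equiv.prodCongr_apply]
    simp only [Prod.map, mixEquiv_apply]
    rw [h1 s.1, h2 s.2]
end

section
/- Let f1 be a q1-level column of length n1, f2 a q2-level column of length n2, and f3, f4 balanced q-level columns over A = Z/q of lengths n1 and n2 respectively. Then the (q1q2)-level column h1 defined by h1_{(i,j)} = q2·f1_i + f2_j and the q-level column f3 ⊕_A f4 (entries f3_i + f4_j mod q) are never fully aliased. -/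
open Finset

/-- the `(q1*q2)`-level mixed column `h1 (i,j) = q2·f1 i + f2 j`
and the `q`-level Kronecker sum `f3 ⊕ f4` (over `ZMod q`, with `f3`, `f4`
balanced) are never fully aliased. -/
theorem mixed_column_never_aliased_with_kronecker_sum
    {n1 n2 q1 q2 q : ℕ} [NeZero q] (hq : 1 < q) (hn1 : 0 < n1) (hn2 : 0 < n2)
    (f1 : Fin n1 → Fin q1) (f2 : Fin n2 → Fin q2)
    (f3 : Fin n1 → ZMod q) (f4 : Fin n2 → ZMod q)
    (hb3 : ∀ a : ZMod q, (Finset.univ.filter fun s => f3 s = a).card = n1 / q)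
    (hb4 : ∀ a : ZMod q, (Finset.univ.filter fun s => f4 s = a).card = n2 / q) :
    ¬ ∃ σ : ZMod q ≃ Fin (q1 * q2), ∀ (i : Fin n1) (j : Fin n2),
        mixLevel (f1 i) (f2 j) = σ (f3 i + f4 j) := by
  haveI : Fact (1 < q) := ⟨hq⟩
  rintro ⟨σ, hσ⟩
  set i0 : Fin n1 := ⟨0, hn1⟩ with hi0def
  set j0 : Fin n2 := ⟨0, hn2⟩ with hj0def
  have hpos3 : 0 < n1 / q := by
    have hmem : i0 ∈ Finset.univ.filter fun s => f3 s = f3 i0 := by simp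
    have hc := Finset.card_pos.mpr ⟨i0, hmem⟩
    rwa [hb3] at hc
  have hpos4 : 0 < n2 / q := by
    have hmem : j0 ∈ Finset.univ.filter fun s => f4 s = f4 j0 := by simp
    have hc := Finset.card_pos.mpr ⟨j0, hmem⟩
    rwa [hb4] at hc
  have h3 : ∀ a : ZMod q, ∃ i, f3 i = a := by
    intro a
    have hc : 0 < (Finset.univ.filter fun s => f3 s = a).card := by
      rw [hb3]; exact hpos3
    obtain ⟨i, hi⟩ := Finset.card_pos.mp hc
    exact ⟨i, (Finset.mem_filter.mp hi).2⟩
  have h4 : ∀ a : ZMod q, ∃ j, f4 j = a := by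
    intro a
    have hc : 0 < (Finset.univ.filter fun s => f4 s = a).card := by
      rw [hb4]; exact hpos4
    obtain ⟨j, hj⟩ := Finset.card_pos.mp hc
    exact ⟨j, (Finset.mem_filter.mp hj).2⟩
  have key : ∀ x : ZMod q, (σ x).val = q2 * (f1 i0).val + (f2 j0).val := by
    intro x
    obtain ⟨j, hj⟩ := h4 (x - f3 i0)
    obtain ⟨i, hi⟩ := h3 (x - f4 j0)
    have e1 := hσ i0 j
    have e2 := hσ i j0
    rw [hj] at e1
    rw [hi] at e2
    have ha1 : f3 i0 + (x - f3 i0) = x := by ring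
    have ha2 : x - f4 j0 + f4 j0 = x := by ring
    rw [ha1] at e1
    rw [ha2] at e2
    -- e1 : mixLevel (f1 i0) (f2 j) = σ x, e2 : mixLevel (f1 i) (f2 j0) = σ x
    have heq : (mixLevel (f1 i0) (f2 j)).val = (mixLevel (f1 i) (f2 j0)).val := by
      rw [e1, e2]
    simp only [mixLevel] at heq
    have hb : (f2 j).val < q2 := (f2 j).isLt
    have hb0 : (f2 j0).val < q2 := (f2 j0).isLt
    -- from q2*a+b = q2*c+d with b,d<q2, deduce b=d
    have hmod : (f2 j).val = (f2 j0).val := by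
      have m1 : (q2 * (f1 i0).val + (f2 j).val) % q2 = (f2 j).val := by
        rw [Nat.mul_add_mod, Nat.mod_eq_of_lt hb]
      have m2 : (q2 * (f1 i).val + (f2 j0).val) % q2 = (f2 j0).val := by
        rw [Nat.mul_add_mod, Nat.mod_eq_of_lt hb0]
      rw [← m1, ← m2, heq]
    rw [← e1]
    simp only [mixLevel]
    omega
  have h01 : σ (0 : ZMod q) = σ (1 : ZMod q) := by
    have := key 0
    have := key 1
    apply Fin.ext
    omega
  have : (0 : ZMod q) = 1 := σ.injective h01
  exact zero_ne_one this
end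

section
/- Let f1, f3 be balanced columns of length n1 with q1, q3 levels and f2, f4 balanced columns of length n2 with q2, q4 levels. Define h1 of length n1n2 by h1_{(i,j)} = q2·f1_i + f2_j (q1q2 levels) and h2 by h2_{(i,j)} = q4·f3_i + f4_j (q3q4 levels). Then f_NOD(h1, h2) = f_NOD(f1,f3)·f_NOD(f2,f4) + (n2²/(q2 q4))·f_NOD(f1,f3) + (n1²/(q1 q3))·f_NOD(f2,f4). -/
open Finset

def fNOD {I α β : Type*} [Fintype I] [Fintype α] [Fintype β]
    [DecidableEq α] [DecidableEq β] (f : I → α) (g : I → β) : ℚ :=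
  ∑ a : α, ∑ b : β,
    (((Finset.univ.filter fun s => f s = a ∧ g s = b).card : ℚ)
      - (Fintype.card I : ℚ) / ((Fintype.card α : ℚ) * (Fintype.card β : ℚ))) ^ 2

lemma mixLevel_inj {q1 q2 : ℕ} {a a' : Fin q1} {b b' : Fin q2}
    (h : mixLevel a b = mixLevel a' b') : a = a' ∧ b = b' := by
  have hv : q2 * a.val + b.val = q2 * a'.val + b'.val := congrArg Fin.val h
  have hb := b.isLt; have hb' := b'.isLt
  have ha : a.val = a'.val := by nlinarith [Nat.lt_or_ge a.val a'.val]
  refine ⟨Fin.ext ha, Fin.ext ?_⟩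
  rw [ha] at hv
  omega

lemma mixLevel_eq_iff {q1 q2 : ℕ} {a a' : Fin q1} {b b' : Fin q2} :
    mixLevel a b = mixLevel a' b' ↔ a = a' ∧ b = b' := by
  constructor
  · exact mixLevel_inj
  · rintro ⟨rfl, rfl⟩; rfl

lemma mixLevel_bij {q1 q2 : ℕ} :
    Function.Bijective (fun p : Fin q1 × Fin q2 => mixLevel p.1 p.2) := by
  rw [Fintype.bijective_iff_injective_and_card]
  constructor
  · intro ⟨a, b⟩ ⟨a', b'⟩ h
    obtain ⟨h1, h2⟩ := mixLevel_inj h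
    exact Prod.ext h1 h2
  · simp

lemma sum_mixLevel {m k : ℕ} (F : Fin (m * k) → ℚ) :
    ∑ x : Fin (m * k), F x = ∑ a : Fin m, ∑ b : Fin k, F (mixLevel a b) := by
  calc ∑ x : Fin (m * k), F x
      = ∑ p : Fin m × Fin k, F (mixLevel p.1 p.2) :=
        (Fintype.sum_bijective _ mixLevel_bij _ _ (fun p => rfl)).symm
    _ = _ := Fintype.sum_prod_type _

lemma sum_counts {I α β : Type*} [Fintype I] [Fintype α] [Fintype β]
    [DecidableEq α] [DecidableEq β] (f : I → α) (g : I → β) :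
    ∑ a : α, ∑ b : β, ((Finset.univ.filter fun s => f s = a ∧ g s = b).card : ℚ)
      = (Fintype.card I : ℚ) := by
  have h := Finset.card_eq_sum_card_fiberwise
    (f := fun s : I => (f s, g s)) (s := Finset.univ) (t := Finset.univ)
    (fun x _ => Finset.mem_univ _)
  rw [← Finset.card_univ, h]
  push_cast
  rw [Fintype.sum_prod_type]
  simp [Prod.ext_iff]

lemma fNOD_eq {I α β : Type*} [Fintype I] [Fintype α] [Fintype β]
    [DecidableEq α] [DecidableEq β] (f : I → α) (g : I → β) :
    fNOD f g = (∑ a : α, ∑ b : β,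
        ((Finset.univ.filter fun s => f s = a ∧ g s = b).card : ℚ) ^ 2)
      - (Fintype.card I : ℚ) ^ 2 / ((Fintype.card α : ℚ) * (Fintype.card β : ℚ)) := by
  unfold fNOD
  set c : ℚ := (Fintype.card I : ℚ) / ((Fintype.card α : ℚ) * (Fintype.card β : ℚ)) with hc
  have expand : ∀ x : ℚ, (x - c) ^ 2 = x ^ 2 - 2 * c * x + c ^ 2 := by intro x; ring
  simp_rw [expand, Finset.sum_add_distrib, Finset.sum_sub_distrib, ← Finset.mul_sum,
    Finset.sum_const, Finset.card_univ, nsmul_eq_mul]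
  rw [sum_counts]
  by_cases hq : ((Fintype.card α : ℚ) * (Fintype.card β : ℚ)) = 0
  · rw [hc, hq, div_zero]; ring
  · rw [hc]; field_simp; ring

/-- `f_NOD` of the mixed columns `h1 (i,j) = q2·f1 i + f2 j` and
`h2 (i,j) = q4·f3 i + f4 j` decomposes in terms of the `f_NOD`-values of the
source columns. -/
theorem fNOD_of_mixed_columns {n1 n2 q1 q2 q3 q4 : ℕ}
    (f1 : Fin n1 → Fin q1) (f3 : Fin n1 → Fin q3)
    (f2 : Fin n2 → Fin q2) (f4 : Fin n2 → Fin q4)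
    (hb1 : ∀ a : Fin q1, (Finset.univ.filter fun s => f1 s = a).card = n1 / q1)
    (hb3 : ∀ a : Fin q3, (Finset.univ.filter fun s => f3 s = a).card = n1 / q3)
    (hb2 : ∀ a : Fin q2, (Finset.univ.filter fun s => f2 s = a).card = n2 / q2)
    (hb4 : ∀ a : Fin q4, (Finset.univ.filter fun s => f4 s = a).card = n2 / q4) :
    fNOD (fun s : Fin n1 × Fin n2 => mixLevel (f1 s.1) (f2 s.2))
        (fun s : Fin n1 × Fin n2 => mixLevel (f3 s.1) (f4 s.2))
      = fNOD f1 f3 * fNOD f2 f4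
        + (n2 : ℚ) ^ 2 / ((q2 : ℚ) * (q4 : ℚ)) * fNOD f1 f3
        + (n1 : ℚ) ^ 2 / ((q1 : ℚ) * (q3 : ℚ)) * fNOD f2 f4 := by
  have key : ∀ (a : Fin q1) (b : Fin q2) (c : Fin q3) (d : Fin q4),
      ((Finset.univ.filter fun s : Fin n1 × Fin n2 =>
          mixLevel (f1 s.1) (f2 s.2) = mixLevel a b ∧
          mixLevel (f3 s.1) (f4 s.2) = mixLevel c d).card : ℚ)
      = ((Finset.univ.filter fun i => f1 i = a ∧ f3 i = c).card : ℚ)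
        * ((Finset.univ.filter fun j => f2 j = b ∧ f4 j = d).card : ℚ) := by
    intro a b c d
    have : (Finset.univ.filter fun s : Fin n1 × Fin n2 =>
          mixLevel (f1 s.1) (f2 s.2) = mixLevel a b ∧
          mixLevel (f3 s.1) (f4 s.2) = mixLevel c d)
        = (Finset.univ.filter fun s : Fin n1 × Fin n2 =>
          (f1 s.1 = a ∧ f3 s.1 = c) ∧ (f2 s.2 = b ∧ f4 s.2 = d)) := by
      apply Finset.filter_congr
      intro s _
      simp only [mixLevel_eq_iff]
      tauto
    rw [this, ← Finset.univ_product_univ,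
      Finset.filter_product (fun i => f1 i = a ∧ f3 i = c) (fun j => f2 j = b ∧ f4 j = d),
      Finset.card_product]
    push_cast
    ring
  rw [fNOD_eq, fNOD_eq f1 f3, fNOD_eq f2 f4]
  have hS : (∑ x : Fin (q1 * q2), ∑ y : Fin (q3 * q4),
      ((Finset.univ.filter fun s : Fin n1 × Fin n2 =>
          mixLevel (f1 s.1) (f2 s.2) = x ∧
          mixLevel (f3 s.1) (f4 s.2) = y).card : ℚ) ^ 2)
      = (∑ a : Fin q1, ∑ c : Fin q3,
          ((Finset.univ.filter fun i => f1 i = a ∧ f3 i = c).card : ℚ) ^ 2)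
        * (∑ b : Fin q2, ∑ d : Fin q4,
          ((Finset.univ.filter fun j => f2 j = b ∧ f4 j = d).card : ℚ) ^ 2) := by
    rw [sum_mixLevel]
    simp_rw [sum_mixLevel, key, mul_pow, ← Finset.mul_sum, ← Finset.sum_mul]
    rw [Finset.sum_mul_sum]
  rw [hS]
  have hAB : ((n1 : ℚ) ^ 2 / ((q1 : ℚ) * (q3 : ℚ)))
      * ((n2 : ℚ) ^ 2 / ((q2 : ℚ) * (q4 : ℚ)))
      = ((n1 : ℚ) * (n2 : ℚ)) ^ 2 / (((q1 : ℚ) * (q2 : ℚ)) * ((q3 : ℚ) * (q4 : ℚ))) := by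
    rw [div_mul_div_comm]
    congr 1 <;> ring
  simp only [Fintype.card_prod, Fintype.card_fin]
  push_cast
  linear_combination hAB
end

section
/- Let f1, f2 be balanced columns over A = Z/q of lengths n1, n2 and f3, f4 balanced columns over A' = Z/q' of lengths n1, n2. If q = q' then f_NOD(f1 ⊕_A f2, f3 ⊕_{A'} f4) ≤ q²·f_NOD(f1,f3)·f_NOD(f2,f4) + min{n2²·f_NOD(f1,f3), n1²·f_NOD(f2,f4)}, with equality if and only if f1 is orthogonal to f3 or f2 is orthogonal to f4. -/
set_option linter.unusedSectionVars false


open Finset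

/-- Two columns are orthogonal if each level pair appears the average number
of times. -/
def OrthCols {I α β : Type*} [Fintype I] [Fintype α] [Fintype β]
    [DecidableEq α] [DecidableEq β] (f : I → α) (g : I → β) : Prop :=
  ∀ (a : α) (b : β),
    ((Finset.univ.filter fun s => f s = a ∧ g s = b).card : ℚ)
      = (Fintype.card I : ℚ) / ((Fintype.card α : ℚ) * (Fintype.card β : ℚ))

section Aux

variable {G : Type*} [AddCommGroup G] [Fintype G] [DecidableEq G]

/-- Fiber count function. -/
private def Nf {I : Type*} [Fintype I] (F : I → G) (u : G) : ℚ :=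
  ((Finset.univ.filter fun s => F s = u).card : ℚ)

private lemma Nf_nonneg {I : Type*} [Fintype I] (F : I → G) (u : G) : 0 ≤ Nf F u :=
  Nat.cast_nonneg _

/-- Weighted Cauchy–Schwarz. -/
private lemma wcs {ι : Type*} (s : Finset ι) (w a : ι → ℚ) (hw : ∀ i ∈ s, 0 ≤ w i) :
    (∑ i ∈ s, a i * w i) ^ 2 ≤ (∑ i ∈ s, w i) * ∑ i ∈ s, a i ^ 2 * w i := by
  have h0 : 0 ≤ ∑ i ∈ s, ∑ j ∈ s, (w i * w j) * (a i - a j) ^ 2 :=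
    Finset.sum_nonneg fun i hi => Finset.sum_nonneg fun j hj =>
      mul_nonneg (mul_nonneg (hw i hi) (hw j hj)) (sq_nonneg _)
  have expand : ∑ i ∈ s, ∑ j ∈ s, (w i * w j) * (a i - a j) ^ 2
      = 2 * ((∑ i ∈ s, w i) * ∑ i ∈ s, a i ^ 2 * w i)
        - 2 * (∑ i ∈ s, a i * w i) ^ 2 := by
    have h1 : ∀ i j, (w i * w j) * (a i - a j) ^ 2
        = (a i ^ 2 * w i) * w j - 2 * ((a i * w i) * (a j * w j))
          + w i * (a j ^ 2 * w j) := by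
      intros; ring
    simp_rw [h1, Finset.sum_add_distrib, Finset.sum_sub_distrib, ← Finset.mul_sum,
      ← Finset.sum_mul]
    ring
  linarith

private lemma fiber_sum {I : Type*} [Fintype I] (F : I → G) (g : G → ℚ) :
    ∑ s : I, g (F s) = ∑ u : G, Nf F u * g u := by
  have h : ∀ s : I, (∑ u : G, if F s = u then g u else 0) = g (F s) := fun s => by simp
  simp_rw [← h, Finset.sum_comm (γ := I) (α := G)]
  refine Finset.sum_congr rfl fun u _ => ?_
  rw [← Finset.sum_filter, Finset.sum_const, nsmul_eq_mul, Nf]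

private lemma fiber_total {I : Type*} [Fintype I] (F : I → G) :
    ∑ u : G, Nf F u = (Fintype.card I : ℚ) := by
  have h := fiber_sum F (fun _ => (1 : ℚ))
  simpa using h.symm

private lemma conv_card {I1 I2 : Type*} [Fintype I1] [Fintype I2]
    (F1 : I1 → G) (F2 : I2 → G) (z : G) :
    ((Finset.univ.filter fun p : I1 × I2 => F1 p.1 + F2 p.2 = z).card : ℚ)
      = ∑ u : G, Nf F1 u * Nf F2 (z - u) := by
  have h1 : ((Finset.univ.filter fun p : I1 × I2 => F1 p.1 + F2 p.2 = z).card : ℕ)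
      = ∑ s : I1, ((Finset.univ.filter fun t : I2 => F2 t = z - F1 s).card : ℕ) := by
    rw [Finset.card_filter, Fintype.sum_prod_type]
    refine Finset.sum_congr rfl fun s _ => ?_
    rw [Finset.card_filter]
    simp only [eq_sub_iff_add_eq']
  calc ((Finset.univ.filter fun p : I1 × I2 => F1 p.1 + F2 p.2 = z).card : ℚ)
      = ∑ s : I1, Nf F2 (z - F1 s) := by rw [h1]; push_cast; rfl
    _ = ∑ u : G, Nf F1 u * Nf F2 (z - u) := fiber_sum F1 (fun u => Nf F2 (z - u))

private lemma conv_card' {I1 I2 : Type*} [Fintype I1] [Fintype I2]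
    (F1 : I1 → G) (F2 : I2 → G) (z : G) :
    ((Finset.univ.filter fun p : I1 × I2 => F1 p.1 + F2 p.2 = z).card : ℚ)
      = ∑ u : G, Nf F2 u * Nf F1 (z - u) := by
  rw [conv_card F1 F2 z]
  exact Fintype.sum_equiv (Equiv.subLeft z) _ _ fun u => by
    simp [sub_sub_cancel, mul_comm]

private lemma sum_shift {I : Type*} [Fintype I] (F : I → G) (z : G) :
    ∑ u : G, Nf F (z - u) = (Fintype.card I : ℚ) := by
  rw [← fiber_total F]
  exact Fintype.sum_equiv (Equiv.subLeft z) _ _ fun u => rfl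

private lemma conv_sq_le (D w : G → ℚ) (hw : ∀ u, 0 ≤ w u) :
    ∑ z : G, (∑ u : G, D u * w (z - u)) ^ 2
      ≤ (∑ u : G, w u) ^ 2 * ∑ u : G, D u ^ 2 := by
  have hW : ∀ z : G, ∑ u : G, w (z - u) = ∑ u : G, w u := fun z =>
    Fintype.sum_equiv (Equiv.subLeft z) _ _ fun u => rfl
  have step : ∀ z : G, (∑ u : G, D u * w (z - u)) ^ 2
      ≤ (∑ u : G, w u) * ∑ u : G, D u ^ 2 * w (z - u) := fun z => by
    have h := wcs Finset.univ (fun u => w (z - u)) D (fun u _ => hw _)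
    rwa [hW z] at h
  have hWnn : 0 ≤ ∑ u : G, w u := Finset.sum_nonneg fun u _ => hw u
  calc ∑ z : G, (∑ u : G, D u * w (z - u)) ^ 2
      ≤ ∑ z : G, (∑ u : G, w u) * ∑ u : G, D u ^ 2 * w (z - u) :=
        Finset.sum_le_sum fun z _ => step z
    _ = (∑ u : G, w u) * ∑ z : G, ∑ u : G, D u ^ 2 * w (z - u) := by
        rw [Finset.mul_sum]
    _ = (∑ u : G, w u) * ∑ u : G, D u ^ 2 * ∑ z : G, w (z - u) := by
        rw [Finset.sum_comm]
        congr 1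
        exact Finset.sum_congr rfl fun u _ => by rw [Finset.mul_sum]
    _ = (∑ u : G, w u) ^ 2 * ∑ u : G, D u ^ 2 := by
        have : ∀ u : G, ∑ z : G, w (z - u) = ∑ v : G, w v := fun u =>
          Fintype.sum_equiv (Equiv.subRight u) _ _ fun z => rfl
        simp_rw [this]
        simp_rw [mul_comm (D _ ^ 2), ← Finset.mul_sum]
        ring
    
private lemma key_bound {I1 I2 : Type*} [Fintype I1] [Fintype I2]
    (F1 : I1 → G) (F2 : I2 → G) (c1 : ℚ) :
    ∑ z : G,
        (((Finset.univ.filter fun p : I1 × I2 => F1 p.1 + F2 p.2 = z).card : ℚ)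
          - c1 * (Fintype.card I2 : ℚ)) ^ 2
      ≤ (Fintype.card I2 : ℚ) ^ 2
          * ∑ u : G, (Nf F1 u - c1) ^ 2 := by
  have key : ∀ z : G,
      ((Finset.univ.filter fun p : I1 × I2 => F1 p.1 + F2 p.2 = z).card : ℚ)
          - c1 * (Fintype.card I2 : ℚ)
        = ∑ u : G, (Nf F1 u - c1) * Nf F2 (z - u) := fun z => by
    rw [conv_card F1 F2 z]
    simp_rw [sub_mul, Finset.sum_sub_distrib, ← Finset.mul_sum, sum_shift F2 z]
  simp_rw [key]
  have h := conv_sq_le (fun u => Nf F1 u - c1) (Nf F2) (Nf_nonneg F2)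
  rwa [fiber_total F2] at h

private lemma key_bound' {I1 I2 : Type*} [Fintype I1] [Fintype I2]
    (F1 : I1 → G) (F2 : I2 → G) (c2 : ℚ) :
    ∑ z : G,
        (((Finset.univ.filter fun p : I1 × I2 => F1 p.1 + F2 p.2 = z).card : ℚ)
          - c2 * (Fintype.card I1 : ℚ)) ^ 2
      ≤ (Fintype.card I1 : ℚ) ^ 2
          * ∑ u : G, (Nf F2 u - c2) ^ 2 := by
  have key : ∀ z : G,
      ((Finset.univ.filter fun p : I1 × I2 => F1 p.1 + F2 p.2 = z).card : ℚ)
          - c2 * (Fintype.card I1 : ℚ)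
        = ∑ u : G, (Nf F2 u - c2) * Nf F1 (z - u) := fun z => by
    rw [conv_card' F1 F2 z]
    simp_rw [sub_mul, Finset.sum_sub_distrib, ← Finset.mul_sum, sum_shift F1 z]
  simp_rw [key]
  have h := conv_sq_le (fun u => Nf F2 u - c2) (Nf F1) (Nf_nonneg F1)
  rwa [fiber_total F1] at h

private lemma fNOD_pair {I α β : Type*} [Fintype I] [Fintype α] [Fintype β]
    [DecidableEq α] [DecidableEq β] (f : I → α) (g : I → β) :
    fNOD f g = ∑ u : α × β,
      (((Finset.univ.filter fun s => (f s, g s) = u).card : ℚ)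
        - (Fintype.card I : ℚ)
            / ((Fintype.card α : ℚ) * (Fintype.card β : ℚ))) ^ 2 := by
  rw [fNOD, Fintype.sum_prod_type]
  refine Finset.sum_congr rfl fun a _ => Finset.sum_congr rfl fun b _ => ?_
  have h : (Finset.univ.filter fun s => f s = a ∧ g s = b)
      = (Finset.univ.filter fun s => (f s, g s) = (a, b)) := by
    apply Finset.filter_congr
    intro s _
    simp [Prod.ext_iff]
  rw [h]

private lemma fNOD_nonneg {I α β : Type*} [Fintype I] [Fintype α] [Fintype β]
    [DecidableEq α] [DecidableEq β] (f : I → α) (g : I → β) : 0 ≤ fNOD f g :=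
  Finset.sum_nonneg fun _ _ => Finset.sum_nonneg fun _ _ => sq_nonneg _

private lemma orth_iff {I α β : Type*} [Fintype I] [Fintype α] [Fintype β]
    [DecidableEq α] [DecidableEq β] (f : I → α) (g : I → β) :
    OrthCols f g ↔ fNOD f g = 0 := by
  constructor
  · intro h
    refine Finset.sum_eq_zero fun a _ => Finset.sum_eq_zero fun b _ => ?_
    rw [h a b]; ring
  · intro h a b
    have h1 := (Finset.sum_eq_zero_iff_of_nonneg
      (fun a _ => Finset.sum_nonneg fun b _ => sq_nonneg _)).1 h a (Finset.mem_univ a)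
    have h2 := (Finset.sum_eq_zero_iff_of_nonneg
      (fun b _ => sq_nonneg _)).1 h1 b (Finset.mem_univ b)
    have h3 := sq_eq_zero_iff.mp h2
    linarith [h3]

end Aux

/-- bound on `f_NOD` of two Kronecker sums over `ZMod q`, with
equality iff `f1 ⊥ f3` or `f2 ⊥ f4`. -/
theorem fNOD_kronecker_sum_le {n1 n2 q : ℕ} [NeZero q]
    (f1 f3 : Fin n1 → ZMod q) (f2 f4 : Fin n2 → ZMod q)
    (hb1 : ∀ a : ZMod q, (Finset.univ.filter fun s => f1 s = a).card = n1 / q)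
    (hb3 : ∀ a : ZMod q, (Finset.univ.filter fun s => f3 s = a).card = n1 / q)
    (hb2 : ∀ a : ZMod q, (Finset.univ.filter fun s => f2 s = a).card = n2 / q)
    (hb4 : ∀ a : ZMod q, (Finset.univ.filter fun s => f4 s = a).card = n2 / q) :
    fNOD (fun s : Fin n1 × Fin n2 => f1 s.1 + f2 s.2)
        (fun s : Fin n1 × Fin n2 => f3 s.1 + f4 s.2)
      ≤ (q : ℚ) ^ 2 * fNOD f1 f3 * fNOD f2 f4
        + min ((n2 : ℚ) ^ 2 * fNOD f1 f3) ((n1 : ℚ) ^ 2 * fNOD f2 f4) ∧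
    (fNOD (fun s : Fin n1 × Fin n2 => f1 s.1 + f2 s.2)
        (fun s : Fin n1 × Fin n2 => f3 s.1 + f4 s.2)
      = (q : ℚ) ^ 2 * fNOD f1 f3 * fNOD f2 f4
        + min ((n2 : ℚ) ^ 2 * fNOD f1 f3) ((n1 : ℚ) ^ 2 * fNOD f2 f4)
      ↔ OrthCols f1 f3 ∨ OrthCols f2 f4) := by
  have hq0 : (q : ℚ) ≠ 0 := Nat.cast_ne_zero.mpr (NeZero.ne q)
  -- abbreviations
  set S1 := fNOD f1 f3 with hS1def
  set S2 := fNOD f2 f4 with hS2def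
  set L := fNOD (fun s : Fin n1 × Fin n2 => f1 s.1 + f2 s.2)
      (fun s : Fin n1 × Fin n2 => f3 s.1 + f4 s.2) with hLdef
  have hS1nn : 0 ≤ S1 := fNOD_nonneg _ _
  have hS2nn : 0 ≤ S2 := fNOD_nonneg _ _
  have hLnn : 0 ≤ L := fNOD_nonneg _ _
  -- rewrite fNODs over the product group
  have eS1 : S1 = ∑ u : ZMod q × ZMod q,
      (Nf (fun s : Fin n1 => (f1 s, f3 s)) u - (n1 : ℚ) / ((q : ℚ) * q)) ^ 2 := by
    rw [hS1def, fNOD_pair]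
    simp only [Nf, Fintype.card_fin, ZMod.card]
  have eS2 : S2 = ∑ u : ZMod q × ZMod q,
      (Nf (fun t : Fin n2 => (f2 t, f4 t)) u - (n2 : ℚ) / ((q : ℚ) * q)) ^ 2 := by
    rw [hS2def, fNOD_pair]
    simp only [Nf, Fintype.card_fin, ZMod.card]
  have eL : L = ∑ z : ZMod q × ZMod q,
      (((Finset.univ.filter fun p : Fin n1 × Fin n2 =>
          (fun s : Fin n1 => (f1 s, f3 s)) p.1 + (fun t : Fin n2 => (f2 t, f4 t)) p.2
            = z).card : ℚ)
        - ((n1 : ℚ) * n2) / ((q : ℚ) * q)) ^ 2 := by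
    have hfilt : ∀ z : ZMod q × ZMod q,
        (Finset.univ.filter fun p : Fin n1 × Fin n2 =>
            ((f1 p.1 + f2 p.2, f3 p.1 + f4 p.2) : ZMod q × ZMod q) = z)
          = (Finset.univ.filter fun p : Fin n1 × Fin n2 =>
            (fun s : Fin n1 => (f1 s, f3 s)) p.1 + (fun t : Fin n2 => (f2 t, f4 t)) p.2
              = z) := fun z => by
      apply Finset.filter_congr
      intro p _
      simp [Prod.ext_iff]
    rw [hLdef, fNOD_pair]
    simp only [Fintype.card_fin, ZMod.card, Fintype.card_prod, Nat.cast_mul]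
    refine Finset.sum_congr rfl fun z _ => ?_
    rw [hfilt z]
  -- the two key bounds
  have hB1 : L ≤ (n2 : ℚ) ^ 2 * S1 := by
    have h := key_bound (fun s : Fin n1 => (f1 s, f3 s)) (fun t : Fin n2 => (f2 t, f4 t))
      ((n1 : ℚ) / ((q : ℚ) * q))
    simp only [Fintype.card_fin] at h
    have hc : ((n1 : ℚ) * n2) / ((q : ℚ) * q) = (n1 : ℚ) / ((q : ℚ) * q) * n2 := by ring
    rw [eL, eS1, hc]
    exact h
  have hB2 : L ≤ (n1 : ℚ) ^ 2 * S2 := by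
    have h := key_bound' (fun s : Fin n1 => (f1 s, f3 s)) (fun t : Fin n2 => (f2 t, f4 t))
      ((n2 : ℚ) / ((q : ℚ) * q))
    simp only [Fintype.card_fin] at h
    have hc : ((n1 : ℚ) * n2) / ((q : ℚ) * q) = (n2 : ℚ) / ((q : ℚ) * q) * n1 := by ring
    rw [eL, eS2, hc]
    exact h
  have hM : L ≤ min ((n2 : ℚ) ^ 2 * S1) ((n1 : ℚ) ^ 2 * S2) := le_min hB1 hB2
  have hE : 0 ≤ (q : ℚ) ^ 2 * S1 * S2 := by positivity
  refine ⟨by linarith [le_min hB1 hB2], ?_, ?_⟩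
  · -- equality → orthogonality
    intro h
    have hmin : min ((n2 : ℚ) ^ 2 * S1) ((n1 : ℚ) ^ 2 * S2) ≥ L := hM
    have h0 : (q : ℚ) ^ 2 * S1 * S2 ≤ 0 := by linarith
    have h1 : (q : ℚ) ^ 2 * S1 * S2 = 0 := le_antisymm h0 hE
    have h2 : S1 * S2 = 0 := by
      have hq2 : (q : ℚ) ^ 2 ≠ 0 := pow_ne_zero 2 hq0
      have h1' : (q : ℚ) ^ 2 * (S1 * S2) = 0 := by rw [← mul_assoc]; exact h1
      exact (mul_eq_zero.mp h1').resolve_left hq2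
    rcases mul_eq_zero.mp h2 with h3 | h3
    · exact Or.inl ((orth_iff f1 f3).mpr h3)
    · exact Or.inr ((orth_iff f2 f4).mpr h3)
  · -- orthogonality → equality
    rintro (h | h)
    · have h1 : S1 = 0 := (orth_iff f1 f3).mp h
      have hL0 : L = 0 := le_antisymm (by rw [h1] at hB1; linarith) hLnn
      rw [hL0, h1]
      rw [min_eq_left (by simpa using mul_nonneg (sq_nonneg (n1 : ℚ)) hS2nn)]
      ring
    · have h1 : S2 = 0 := (orth_iff f2 f4).mp h
      have hL0 : L = 0 := le_antisymm (by rw [h1] at hB2; linarith) hLnn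
      rw [hL0, h1]
      rw [min_eq_right (by simpa using mul_nonneg (sq_nonneg (n2 : ℚ)) hS1nn)]
      ring
end

section
/- Corollary on orthogonality preservation (mixed-level product): if f1 (q1 levels, length n1) is orthogonal to f3 (q3 levels, length n1), and f2 (q2 levels, length n2) is orthogonal to f4 (q4 levels, length n2), all columns balanced, then the mixed columns h1 with h1_{(i,j)} = q2·f1_i + f2_j and h2 with h2_{(i,j)} = q4·f3_i + f4_j are orthogonal. -/
open Finset

lemma mixLevel_eq_iff_s11 {q1 q2 : ℕ} (hq2 : 0 < q2) (x : Fin q1) (y : Fin q2)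
    (a : Fin (q1 * q2)) (a1 : Fin q1) (a2 : Fin q2)
    (h1 : a1.val = a.val / q2) (h2 : a2.val = a.val % q2) :
    mixLevel x y = a ↔ x = a1 ∧ y = a2 := by
  rw [Fin.ext_iff, Fin.ext_iff (b := a1), Fin.ext_iff (b := a2)]
  show q2 * x.val + y.val = a.val ↔ _
  constructor
  · intro h
    have hd : a.val / q2 = x.val := by
      rw [← h, Nat.mul_add_div hq2, Nat.div_eq_of_lt y.isLt, Nat.add_zero]
    have hmm : a.val % q2 = y.val := by
      rw [← h, Nat.mul_add_mod, Nat.mod_eq_of_lt y.isLt]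
    exact ⟨by omega, by omega⟩
  · rintro ⟨hx, hy⟩
    rw [hx, hy, h1, h2]
    exact Nat.div_add_mod a.val q2

/-- if `f1 ⊥ f3` and `f2 ⊥ f4` (balanced columns), then the mixed
columns `h1 (i,j) = q2·f1 i + f2 j` and `h2 (i,j) = q4·f3 i + f4 j` are
orthogonal. -/
theorem mixed_columns_orthogonal {n1 n2 q1 q2 q3 q4 : ℕ}
    (f1 : Fin n1 → Fin q1) (f3 : Fin n1 → Fin q3)
    (f2 : Fin n2 → Fin q2) (f4 : Fin n2 → Fin q4)
    (hb1 : ∀ a : Fin q1, (Finset.univ.filter fun s => f1 s = a).card = n1 / q1)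
    (hb3 : ∀ a : Fin q3, (Finset.univ.filter fun s => f3 s = a).card = n1 / q3)
    (hb2 : ∀ a : Fin q2, (Finset.univ.filter fun s => f2 s = a).card = n2 / q2)
    (hb4 : ∀ a : Fin q4, (Finset.univ.filter fun s => f4 s = a).card = n2 / q4)
    (h13 : OrthCols f1 f3) (h24 : OrthCols f2 f4) :
    OrthCols (fun s : Fin n1 × Fin n2 => mixLevel (f1 s.1) (f2 s.2))
        (fun s : Fin n1 × Fin n2 => mixLevel (f3 s.1) (f4 s.2)) := by
  intro a b
  have hq12 : 0 < q1 * q2 := a.pos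
  have hq34 : 0 < q3 * q4 := b.pos
  have hq1 : 0 < q1 := Nat.pos_of_ne_zero (by rintro rfl; simp at hq12)
  have hq2 : 0 < q2 := Nat.pos_of_ne_zero (by rintro rfl; simp at hq12)
  have hq3 : 0 < q3 := Nat.pos_of_ne_zero (by rintro rfl; simp at hq34)
  have hq4 : 0 < q4 := Nat.pos_of_ne_zero (by rintro rfl; simp at hq34)
  obtain ⟨a1, a2, ha1, ha2⟩ :
      ∃ (a1 : Fin q1) (a2 : Fin q2), a1.val = a.val / q2 ∧ a2.val = a.val % q2 :=
    ⟨⟨a.val / q2, Nat.div_lt_of_lt_mul (lt_of_lt_of_eq a.isLt (Nat.mul_comm q1 q2))⟩,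
      ⟨a.val % q2, Nat.mod_lt _ hq2⟩, rfl, rfl⟩
  obtain ⟨b1, b2, hb1', hb2'⟩ :
      ∃ (b1 : Fin q3) (b2 : Fin q4), b1.val = b.val / q4 ∧ b2.val = b.val % q4 :=
    ⟨⟨b.val / q4, Nat.div_lt_of_lt_mul (lt_of_lt_of_eq b.isLt (Nat.mul_comm q3 q4))⟩,
      ⟨b.val % q4, Nat.mod_lt _ hq4⟩, rfl, rfl⟩
  have hset : (Finset.univ.filter fun s : Fin n1 × Fin n2 =>
        mixLevel (f1 s.1) (f2 s.2) = a ∧ mixLevel (f3 s.1) (f4 s.2) = b)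
      = (Finset.univ.filter fun s1 => f1 s1 = a1 ∧ f3 s1 = b1) ×ˢ
        (Finset.univ.filter fun s2 => f2 s2 = a2 ∧ f4 s2 = b2) := by
    ext s
    simp only [Finset.mem_filter, Finset.mem_univ, true_and, Finset.mem_product,
      mixLevel_eq_iff_s11 hq2 (f1 s.1) (f2 s.2) a a1 a2 ha1 ha2,
      mixLevel_eq_iff_s11 hq4 (f3 s.1) (f4 s.2) b b1 b2 hb1' hb2']
    tauto
  rw [hset, Finset.card_product]
  push_cast
  rw [h13 a1 b1, h24 a2 b2]
  simp only [Fintype.card_prod, Fintype.card_fin]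
  have e1 : (q1:ℚ) ≠ 0 := by positivity
  have e2 : (q2:ℚ) ≠ 0 := by positivity
  have e3 : (q3:ℚ) ≠ 0 := by positivity
  have e4 : (q4:ℚ) ≠ 0 := by positivity
  push_cast
  rw [div_mul_div_comm]
  congr 1
  ring
end

section
/- Corollary on orthogonality preservation (Kronecker sum): let f1, f3 be balanced q-level columns of length n1 over Z/q, and f2, f4 balanced q-level columns of length n2 over Z/q. If f1 is orthogonal to f3, or f2 is orthogonal to f4, then f1 ⊕ f2 is orthogonal to f3 ⊕ f4, where ⊕ denotes the Kronecker sum over Z/q (entries f_i + g_j mod q listed lexicographically). -/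
open Finset

/-- if `f1 ⊥ f3` or `f2 ⊥ f4` (balanced `q`-level columns over
`ZMod q`), then the Kronecker sums `f1 ⊕ f2` and `f3 ⊕ f4` are orthogonal. -/
theorem kronecker_sum_orthogonal {n1 n2 q : ℕ} [NeZero q]
    (f1 f3 : Fin n1 → ZMod q) (f2 f4 : Fin n2 → ZMod q)
    (hb1 : ∀ a : ZMod q, (Finset.univ.filter fun s => f1 s = a).card = n1 / q)
    (hb3 : ∀ a : ZMod q, (Finset.univ.filter fun s => f3 s = a).card = n1 / q)
    (hb2 : ∀ a : ZMod q, (Finset.univ.filter fun s => f2 s = a).card = n2 / q)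
    (hb4 : ∀ a : ZMod q, (Finset.univ.filter fun s => f4 s = a).card = n2 / q)
    (h : OrthCols f1 f3 ∨ OrthCols f2 f4) :
    OrthCols (fun s : Fin n1 × Fin n2 => f1 s.1 + f2 s.2)
        (fun s : Fin n1 × Fin n2 => f3 s.1 + f4 s.2) := by
  intro a b
  rcases h with h | h
  · calc ((univ.filter fun s : Fin n1 × Fin n2 =>
          f1 s.1 + f2 s.2 = a ∧ f3 s.1 + f4 s.2 = b).card : ℚ)
        = ∑ s2 : Fin n2, ((univ.filter fun s1 : Fin n1 =>
            f1 s1 = a - f2 s2 ∧ f3 s1 = b - f4 s2).card : ℚ) := by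
          rw [Finset.card_filter]
          push_cast
          rw [Fintype.sum_prod_type_right]
          refine Finset.sum_congr rfl fun s2 _ => ?_
          rw [Finset.card_filter]
          push_cast
          refine Finset.sum_congr rfl fun s1 _ => ?_
          simp only [eq_sub_iff_add_eq]
      _ = ∑ _s2 : Fin n2, ((n1 : ℚ) / ((q : ℚ) * q)) := by
          refine Finset.sum_congr rfl fun s2 _ => ?_
          simpa using h (a - f2 s2) (b - f4 s2)
      _ = ((Fintype.card (Fin n1 × Fin n2) : ℚ)) /
            ((Fintype.card (ZMod q) : ℚ) * (Fintype.card (ZMod q) : ℚ)) := by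
          simp [Fintype.card_prod, ZMod.card]
          ring
  · calc ((univ.filter fun s : Fin n1 × Fin n2 =>
          f1 s.1 + f2 s.2 = a ∧ f3 s.1 + f4 s.2 = b).card : ℚ)
        = ∑ s1 : Fin n1, ((univ.filter fun s2 : Fin n2 =>
            f2 s2 = a - f1 s1 ∧ f4 s2 = b - f3 s1).card : ℚ) := by
          rw [Finset.card_filter]
          push_cast
          rw [Fintype.sum_prod_type]
          refine Finset.sum_congr rfl fun s1 _ => ?_
          rw [Finset.card_filter]
          push_cast
          refine Finset.sum_congr rfl fun s2 _ => ?_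
          simp only [eq_sub_iff_add_eq]
          rw [add_comm (f2 s2), add_comm (f4 s2)]
      _ = ∑ _s1 : Fin n1, ((n2 : ℚ) / ((q : ℚ) * q)) := by
          refine Finset.sum_congr rfl fun s1 _ => ?_
          simpa using h (a - f1 s1) (b - f3 s1)
      _ = ((Fintype.card (Fin n1 × Fin n2) : ℚ)) /
            ((Fintype.card (ZMod q) : ℚ) * (Fintype.card (ZMod q) : ℚ)) := by
          simp [Fintype.card_prod, ZMod.card]
          ring
end

section
/- Let F be an n×m array over A = Z/q with constant coincidence number λ between distinct rows (i.e., any two distinct rows agree in exactly λ positions), and let D be an rq×c difference matrix over A (every difference of two distinct columns of D contains each element of A exactly r times), with no two rows of D identical. Then in the cn × (rq·m) array F ⊕_A Dᵀ (Kronecker sum: block rows indexed by rows of F, within-block rows indexed by rows of Dᵀ, i.e., columns of D), the coincidence number between any two distinct rows equals mr if the two rows come from different columns of D (different within-block indices), and equals λrq if they come from the same column of D but different rows of F. In particular the coincidence numbers between distinct rows of F ⊕_A Dᵀ take only the two values mr and λrq. -/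
open Finset Matrix

set_option maxRecDepth 8000

/-- coincidence numbers of `F ⊕ Dᵀ` for an equidistant design `F`
and a difference matrix `D` take only the values `m*r` (rows coming from
different columns of `D`) and `λ*r*q` (same column of `D`, different rows
of `F`). -/
theorem coincidence_numbers_of_kronecker_sum_with_difference_matrix
    {n m r q c : ℕ} [NeZero q] (lam : ℕ)
    (F : Matrix (Fin n) (Fin m) (ZMod q))
    (hF : ∀ i1 j1 : Fin n, i1 ≠ j1 →
        (Finset.univ.filter fun k => F i1 k = F j1 k).card = lam)
    (D : Matrix (Fin (r * q)) (Fin c) (ZMod q))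
    (hD : ∀ k l : Fin c, k ≠ l → ∀ a : ZMod q,
        (Finset.univ.filter fun i => D i k - D i l = a).card = r)
    (hDrows : ∀ i j : Fin (r * q), (∀ k, D i k = D j k) → i = j) :
    ∀ (i1 j1 : Fin n) (i2 j2 : Fin c), (i1, i2) ≠ (j1, j2) →
      (Finset.univ.filter fun kk : Fin m × Fin (r * q) =>
          F i1 kk.1 + D kk.2 i2 = F j1 kk.1 + D kk.2 j2).card
        = if i2 = j2 then lam * (r * q) else m * r := by
  intro i1 j1 i2 j2 hne
  have key : (Finset.univ.filter fun kk : Fin m × Fin (r * q) =>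
      F i1 kk.1 + D kk.2 i2 = F j1 kk.1 + D kk.2 j2).card
      = ∑ k : Fin m, (Finset.univ.filter fun i : Fin (r * q) =>
          F i1 k + D i i2 = F j1 k + D i j2).card := by
    rw [Finset.card_filter, Fintype.sum_prod_type]
    exact Finset.sum_congr rfl fun k _ => (Finset.card_filter _ _).symm
  rw [key]
  by_cases h : i2 = j2
  · subst h
    have hij : i1 ≠ j1 := fun h => hne (by rw [h])
    simp only [if_pos rfl]
    have : ∀ k : Fin m, (Finset.univ.filter fun i : Fin (r * q) =>
        F i1 k + D i i2 = F j1 k + D i i2).card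
        = if F i1 k = F j1 k then r * q else 0 := by
      intro k
      by_cases hk : F i1 k = F j1 k
      · rw [if_pos hk, Finset.filter_true_of_mem (fun i _ => by rw [hk]),
          Finset.card_univ, Fintype.card_fin]
      · rw [if_neg hk]
        rw [Finset.card_eq_zero, Finset.filter_eq_empty_iff]
        intro i _
        exact fun h => hk (add_right_cancel h)
    simp only [this]
    rw [← Finset.sum_filter, Finset.sum_const, smul_eq_mul, hF i1 j1 hij]
    simp
  · simp only [if_neg h]
    have : ∀ k : Fin m, (Finset.univ.filter fun i : Fin (r * q) =>
        F i1 k + D i i2 = F j1 k + D i j2).card = r := by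
      intro k
      have hset : (Finset.univ.filter fun i : Fin (r * q) =>
          F i1 k + D i i2 = F j1 k + D i j2)
          = Finset.univ.filter fun i : Fin (r * q) =>
            D i i2 - D i j2 = F j1 k - F i1 k := by
        ext i
        simp only [Finset.mem_filter, Finset.mem_univ, true_and]
        constructor <;> intro he <;> linear_combination he
      rw [hset, hD i2 j2 h]
    simp [this, mul_comm]
end

section
/- With F an n-run, m-column array over Z/q with no fully aliased columns and D a normalized difference matrix ND(rq, c, q) over Z/q (first column all zeros) with no two identical rows, the array F ⊕ Dᵀ (Kronecker sum over Z/q) has no two fully aliased columns. -/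
open Finset Matrix

/-- if `F` (balanced columns, no fully aliased columns) is
combined with a normalized difference matrix `D` (no identical rows) via the
Kronecker sum `F ⊕ Dᵀ`, then the resulting design has no fully aliased
columns. -/
theorem kronecker_sum_with_difference_matrix_no_fully_aliased
    {n m r q c : ℕ} [NeZero q] (hn : 0 < n) (hc : 0 < c)
    (F : Matrix (Fin n) (Fin m) (ZMod q))
    (hbal : ∀ (k : Fin m) (a : ZMod q),
        (Finset.univ.filter fun i => F i k = a).card = n / q)
    (hFal : ∀ k l : Fin m, k ≠ l →
        ¬ ∃ σ : Equiv.Perm (ZMod q), ∀ i, F i k = σ (F i l))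
    (D : Matrix (Fin (r * q)) (Fin c) (ZMod q))
    (hD : ∀ k l : Fin c, k ≠ l → ∀ a : ZMod q,
        (Finset.univ.filter fun i => D i k - D i l = a).card = r)
    (hD0 : ∀ i : Fin (r * q), D i ⟨0, hc⟩ = 0)
    (hDrows : ∀ i j : Fin (r * q), (∀ k, D i k = D j k) → i = j) :
    ∀ c1 c2 : Fin m × Fin (r * q), c1 ≠ c2 →
      ¬ ∃ σ : Equiv.Perm (ZMod q), ∀ s : Fin n × Fin c,
          F s.1 c1.1 + D c1.2 s.2 = σ (F s.1 c2.1 + D c2.2 s.2) := by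
  rintro ⟨k1, i1⟩ ⟨k2, i2⟩ hne ⟨σ, hσ⟩
  have hnq : 0 < n / q := by
    obtain ⟨i0⟩ := Fin.pos_iff_nonempty.mp hn
    have h := hbal k1 (F i0 k1)
    have hmem : i0 ∈ Finset.univ.filter fun i => F i k1 = F i0 k1 := by simp
    have := Finset.card_pos.mpr ⟨i0, hmem⟩
    omega
  have hsurj : ∀ (k : Fin m) (a : ZMod q), ∃ i, F i k = a := by
    intro k a
    have h := hbal k a
    have hne' : (Finset.univ.filter fun i => F i k = a).Nonempty :=
      Finset.card_pos.mp (by omega)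
    obtain ⟨i, hi⟩ := hne'
    exact ⟨i, (Finset.mem_filter.mp hi).2⟩
  by_cases hk : k1 = k2
  · subst hk
    have hi : i1 ≠ i2 := fun h => hne (by rw [h])
    have hid : ∀ x, σ x = x := by
      intro x
      obtain ⟨s, hs⟩ := hsurj k1 x
      have h := hσ (s, ⟨0, hc⟩)
      simp only [hD0, add_zero] at h
      rw [hs] at h
      exact h.symm
    refine hi (hDrows i1 i2 fun t => ?_)
    obtain ⟨s⟩ := Fin.pos_iff_nonempty.mp hn
    have h := hσ (s, t)
    rw [hid] at h
    exact add_left_cancel h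
  · refine hFal k1 k2 hk ⟨σ, fun i => ?_⟩
    have h := hσ (i, ⟨0, hc⟩)
    simpa [hD0] using h
end

section
/- Let F be a saturated orthogonal array L_n(q^m) of strength two, i.e. with n runs, m factors and q levels, where m(q-1) = n-1. Then F is equidistant: any two distinct rows i ≠ j of F agree in exactly (m-1)/q positions, that is, the coincidence number λ_ij(F) (the number of columns where rows i and j agree) equals (m-1)/q, and hence q·λ_ij(F) = m-1. -/
open Finset Matrix

/-- Mukerjee–Wu: any two distinct rows of a saturated strength-two
orthogonal array `L_n(q^m)` (so `m(q-1) = n-1`) agree in exactly `(m-1)/q`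
positions; equivalently `q` times the coincidence number equals `m - 1`. -/
theorem saturated_oa_equidistant {n m q : ℕ}
    (F : Matrix (Fin n) (Fin m) (Fin q))
    (hbal : ∀ (k : Fin m) (a : Fin q),
        (Finset.univ.filter fun i => F i k = a).card = n / q)
    (hOA : ∀ k l : Fin m, k ≠ l → ∀ (a b : Fin q),
        (Finset.univ.filter fun i => F i k = a ∧ F i l = b).card = n / (q * q))
    (hsat : m * (q - 1) = n - 1) :
    ∀ i j : Fin n, i ≠ j →
      q * (Finset.univ.filter fun k => F i k = F j k).card = m - 1 := by
  intro i j hij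
  rcases Nat.eq_zero_or_pos m with hm0 | hm
  · subst hm0
    simp
  have hn1 : 1 ≤ n := i.pos
  have hq1 : 1 ≤ q := (F i ⟨0, hm⟩).pos
  set c1 : ℕ := n / q with hc1
  set c2 : ℕ := n / (q * q) with hc2
  -- q * c1 = n
  have hqc1 : q * c1 = n := by
    have k0 : Fin m := ⟨0, hm⟩
    have hfib := Finset.card_eq_sum_card_fiberwise
      (f := fun x : Fin n => F x k0) (s := Finset.univ) (t := Finset.univ)
      (fun x _ => Finset.mem_univ _)
    rw [Finset.card_univ, Fintype.card_fin] at hfib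
    calc q * c1 = ∑ _a : Fin q, c1 := by simp [mul_comm]
    _ = ∑ a : Fin q, (Finset.univ.filter fun x => F x k0 = a).card := by
        refine Finset.sum_congr rfl fun a _ => ?_
        rw [hbal]
    _ = n := hfib.symm
  set L : Fin n → ℤ := fun j' => ∑ k : Fin m, (if F i k = F j' k then (1:ℤ) else 0) with hL
  have hLcard : ∀ j', L j' = ((Finset.univ.filter fun k => F i k = F j' k).card : ℤ) := by
    intro j'
    rw [hL, Finset.card_filter]
    push_cast
    rfl
  -- single-column count
  have hcol : ∀ k : Fin m, (∑ j' : Fin n, if F i k = F j' k then (1:ℤ) else 0) = c1 := by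
    intro k
    have hset : (Finset.univ.filter fun x : Fin n => F i k = F x k)
        = (Finset.univ.filter fun x : Fin n => F x k = F i k) := by
      refine Finset.filter_congr fun x _ => ?_
      exact eq_comm
    calc (∑ j' : Fin n, if F i k = F j' k then (1:ℤ) else 0)
        = ((Finset.univ.filter fun x : Fin n => F i k = F x k).card : ℤ) := by
          rw [Finset.card_filter]; push_cast; rfl
    _ = ((Finset.univ.filter fun x : Fin n => F x k = F i k).card : ℤ) := by rw [hset]
    _ = (c1 : ℤ) := by rw [hbal]
  -- first moment
  have hS1 : ∑ j' : Fin n, L j' = m * c1 := by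
    rw [hL, Finset.sum_comm]
    rw [Finset.sum_congr rfl fun k _ => hcol k]
    simp [mul_comm]
  -- two-column count
  have hcol2 : ∀ k l : Fin m, k ≠ l →
      (∑ j' : Fin n, (if F i k = F j' k then (1:ℤ) else 0) *
        (if F i l = F j' l then (1:ℤ) else 0)) = c2 := by
    intro k l hkl
    have hstep : ∀ x : Fin n, (if F i k = F x k then (1:ℤ) else 0) *
        (if F i l = F x l then (1:ℤ) else 0)
        = (if F i k = F x k ∧ F i l = F x l then (1:ℤ) else 0) := by
      intro x
      by_cases h1 : F i k = F x k <;> by_cases h2 : F i l = F x l <;> simp [h1, h2]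
    have hset : (Finset.univ.filter fun x : Fin n => F i k = F x k ∧ F i l = F x l)
        = (Finset.univ.filter fun x : Fin n => F x k = F i k ∧ F x l = F i l) := by
      refine Finset.filter_congr fun x _ => ?_
      constructor
      · exact fun h => ⟨h.1.symm, h.2.symm⟩
      · exact fun h => ⟨h.1.symm, h.2.symm⟩
    calc (∑ j' : Fin n, (if F i k = F j' k then (1:ℤ) else 0) *
          (if F i l = F j' l then (1:ℤ) else 0))
        = ∑ j' : Fin n, (if F i k = F j' k ∧ F i l = F j' l then (1:ℤ) else 0) :=
          Finset.sum_congr rfl fun x _ => hstep x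
    _ = ((Finset.univ.filter fun x : Fin n => F i k = F x k ∧ F i l = F x l).card : ℤ) := by
          rw [Finset.card_filter]; push_cast; rfl
    _ = (c2 : ℤ) := by rw [hset, hOA k l hkl]
  -- second moment
  have hS2 : ∑ j' : Fin n, L j' ^ 2 = m * c1 + m * ((m : ℤ) - 1) * c2 := by
    have expand : ∀ j' : Fin n, L j' ^ 2 = ∑ k : Fin m, ∑ l : Fin m,
        ((if F i k = F j' k then (1:ℤ) else 0) * (if F i l = F j' l then (1:ℤ) else 0)) := by
      intro j'
      rw [hL, sq, Finset.sum_mul_sum]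
    rw [Finset.sum_congr rfl fun j' _ => expand j', Finset.sum_comm]
    have inner : ∀ k : Fin m, (∑ j' : Fin n, ∑ l : Fin m,
        ((if F i k = F j' k then (1:ℤ) else 0) * (if F i l = F j' l then (1:ℤ) else 0)))
        = ∑ l : Fin m, (if k = l then (c1 : ℤ) else (c2 : ℤ)) := by
      intro k
      rw [Finset.sum_comm]
      refine Finset.sum_congr rfl fun l _ => ?_
      by_cases hkl : k = l
      · subst hkl
        rw [if_pos rfl]
        have hsq : ∀ x : Fin n, (if F i k = F x k then (1:ℤ) else 0) *
            (if F i k = F x k then (1:ℤ) else 0) = (if F i k = F x k then (1:ℤ) else 0) := by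
          intro x; by_cases h : F i k = F x k <;> simp [h]
        rw [Finset.sum_congr rfl fun x _ => hsq x]
        exact hcol k
      · rw [if_neg hkl]
        exact hcol2 k l hkl
    rw [Finset.sum_congr rfl fun k _ => inner k]
    have row : ∀ k : Fin m, (∑ l : Fin m, if k = l then (c1 : ℤ) else (c2 : ℤ))
        = (c1 : ℤ) + ((m : ℤ) - 1) * c2 := by
      intro k
      have hsplit : ∀ l : Fin m, (if k = l then (c1:ℤ) else (c2:ℤ))
          = (c2 : ℤ) + (if k = l then (c1 : ℤ) - c2 else 0) := by
        intro l; by_cases h : k = l <;> simp [h]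
      rw [Finset.sum_congr rfl fun l _ => hsplit l, Finset.sum_add_distrib,
        Finset.sum_ite_eq]
      simp
      ring
    rw [Finset.sum_congr rfl fun k _ => row k]
    simp
    ring
  have hLi : L i = m := by rw [hL]; simp
  have hsat' : (m : ℤ) * ((q:ℤ) - 1) = (n:ℤ) - 1 := by
    zify [hq1, hn1] at hsat
    exact hsat
  have hqc1' : (q:ℤ) * c1 = n := by exact_mod_cast hqc1
  have hdev : ∑ j' ∈ Finset.univ.erase i, ((q : ℤ) * L j' - ((m : ℤ) - 1)) ^ 2 = 0 := by
    have hsplit : ∑ j' ∈ Finset.univ.erase i, ((q : ℤ) * L j' - ((m : ℤ) - 1)) ^ 2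
        = (∑ j' : Fin n, ((q : ℤ) * L j' - ((m : ℤ) - 1)) ^ 2)
          - ((q : ℤ) * L i - ((m : ℤ) - 1)) ^ 2 := by
      rw [← Finset.add_sum_erase _ _ (Finset.mem_univ i)]
      ring
    have hexp : ∑ j' : Fin n, ((q : ℤ) * L j' - ((m : ℤ) - 1)) ^ 2
        = (q:ℤ)^2 * (∑ j' : Fin n, L j' ^ 2)
          - 2 * q * ((m:ℤ) - 1) * (∑ j' : Fin n, L j')
          + n * ((m:ℤ) - 1)^2 := by
      rw [Finset.mul_sum, Finset.mul_sum, ← Finset.sum_sub_distrib]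
      have hcst : ((n : ℤ) * ((m:ℤ)-1)^2) = ∑ _j' : Fin n, ((m:ℤ)-1)^2 := by
        simp [mul_comm]
      rw [hcst, ← Finset.sum_add_distrib]
      exact Finset.sum_congr rfl fun j' _ => by ring
    rw [hsplit, hexp, hS1, hS2, hLi]
    rcases Nat.lt_or_ge m 2 with hm2 | hm2
    · have hm1 : m = 1 := by omega
      subst hm1
      push_cast at hsat' hqc1' ⊢
      linear_combination (q : ℤ) * hqc1' - (q : ℤ) * hsat'
    · have h0m : 0 < m := by omega
      have h1m : 1 < m := by omega
      have hk01 : (⟨0, h0m⟩ : Fin m) ≠ ⟨1, h1m⟩ := by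
        simp [Fin.ext_iff]
      have hfib := Finset.card_eq_sum_card_fiberwise
        (f := fun x : Fin n => (F x ⟨0, h0m⟩, F x ⟨1, h1m⟩)) (s := Finset.univ)
        (t := Finset.univ) (fun x _ => Finset.mem_univ _)
      rw [Finset.card_univ, Fintype.card_fin] at hfib
      have hqc2 : q * q * c2 = n := by
        calc q * q * c2 = ∑ _p : Fin q × Fin q, c2 := by
              simp [Finset.card_univ, mul_comm]
        _ = ∑ p : Fin q × Fin q,
              (Finset.univ.filter fun x => (F x ⟨0, h0m⟩, F x ⟨1, h1m⟩) = p).card := by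
            refine Finset.sum_congr rfl fun p _ => ?_
            have hset : (Finset.univ.filter fun x : Fin n => (F x ⟨0, h0m⟩, F x ⟨1, h1m⟩) = p)
                = (Finset.univ.filter fun x : Fin n =>
                    F x ⟨0, h0m⟩ = p.1 ∧ F x ⟨1, h1m⟩ = p.2) := by
              refine Finset.filter_congr fun x _ => ?_
              constructor
              · intro h; exact ⟨congrArg Prod.fst h, congrArg Prod.snd h⟩
              · intro h; exact Prod.ext h.1 h.2
            rw [hset, hOA _ _ hk01]
        _ = n := hfib.symm
      have hqc2' : (q:ℤ) * q * c2 = n := by exact_mod_cast hqc2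
      linear_combination ((q:ℤ) * m - 2 * m * ((m:ℤ) - 1)) * hqc1'
        + (m : ℤ) * ((m:ℤ) - 1) * hqc2' - ((q:ℤ)*m - m + 1) * hsat'
  have hjmem : j ∈ Finset.univ.erase i :=
    Finset.mem_erase.2 ⟨fun h => hij h.symm, Finset.mem_univ _⟩
  have hterm : ((q : ℤ) * L j - ((m : ℤ) - 1)) ^ 2 = 0 :=
    (Finset.sum_eq_zero_iff_of_nonneg (fun x _ => sq_nonneg _)).1 hdev j hjmem
  have hLj : (q : ℤ) * L j = (m : ℤ) - 1 := by
    have := sq_eq_zero_iff.1 hterm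
    linarith
  rw [hLcard] at hLj
  have hfin : ((q * (Finset.univ.filter fun k => F i k = F j k).card : ℕ) : ℤ)
      = ((m - 1 : ℕ) : ℤ) := by
    push_cast [Nat.cast_sub hm]
    exact_mod_cast hLj
  exact_mod_cast hfin
end

section
/- Let F1 be an F(n1, q1^{m1}) over Z/q1 with constant coincidence number λ1 between distinct rows, F2 an F(n2, q2^{m2}) with constant coincidence number λ2 between distinct rows, and D a normalized difference matrix ND(r q1, n2, q1) over Z/q1. Consider F = [F1 ⊕ Dᵀ, 0_{n1} ⊕ F2], an n1·n2-run design with r·m1·q1 columns of q1 levels and m2 columns of q2 levels (rows indexed by pairs (i1,i2), i1 ∈ rows of F1, i2 ∈ rows of F2; the second block assigns to row (i1,i2) the i2-th row of F2). Then the coincidence number between distinct rows (i1,i2) ≠ (j1,j2) of F equals: λ2 + r·m1 if i2 ≠ j2, and m2 + λ1·r·q1 if i2 = j2 (hence i1 ≠ j1). In particular, coincidence numbers of F take at most the two values λ2 + r m1 and m2 + λ1 r q1. -/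
open Finset Matrix

/-- coincidence numbers of `F = [F1 ⊕ Dᵀ, 0 ⊕ F2]` for
equidistant `F1`, `F2` and a normalized difference matrix `D`: they equal
`λ2 + r·m1` when the `F2`-row indices differ, and `m2 + λ1·r·q1` otherwise. -/
theorem coincidence_numbers_of_two_level_size_construction
    {n1 n2 m1 m2 r q1 q2 : ℕ} [NeZero q1] (hn2 : 0 < n2) (lam1 lam2 : ℕ)
    (F1 : Matrix (Fin n1) (Fin m1) (ZMod q1))
    (hF1 : ∀ i j : Fin n1, i ≠ j →
        (Finset.univ.filter fun k => F1 i k = F1 j k).card = lam1)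
    (F2 : Matrix (Fin n2) (Fin m2) (Fin q2))
    (hF2 : ∀ i j : Fin n2, i ≠ j →
        (Finset.univ.filter fun k => F2 i k = F2 j k).card = lam2)
    (D : Matrix (Fin (r * q1)) (Fin n2) (ZMod q1))
    (hD : ∀ k l : Fin n2, k ≠ l → ∀ a : ZMod q1,
        (Finset.univ.filter fun i => D i k - D i l = a).card = r)
    (hD0 : ∀ i : Fin (r * q1), D i ⟨0, hn2⟩ = 0)
    (hDrows : ∀ i j : Fin (r * q1), (∀ k, D i k = D j k) → i = j) :
    ∀ (i1 j1 : Fin n1) (i2 j2 : Fin n2), (i1, i2) ≠ (j1, j2) →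
      (Finset.univ.filter fun kk : Fin m1 × Fin (r * q1) =>
          F1 i1 kk.1 + D kk.2 i2 = F1 j1 kk.1 + D kk.2 j2).card
        + (Finset.univ.filter fun k : Fin m2 => F2 i2 k = F2 j2 k).card
      = if i2 = j2 then m2 + lam1 * (r * q1) else lam2 + r * m1 := by
  intro i1 j1 i2 j2 hne
  by_cases h : i2 = j2
  · subst h
    have hij : i1 ≠ j1 := fun h' => hne (by simp [h'])
    rw [if_pos rfl]
    have h2 : (Finset.univ.filter fun k : Fin m2 => F2 i2 k = F2 i2 k).card = m2 := by
      simp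
    have h1 : (Finset.univ.filter fun kk : Fin m1 × Fin (r * q1) =>
        F1 i1 kk.1 + D kk.2 i2 = F1 j1 kk.1 + D kk.2 i2).card = lam1 * (r * q1) := by
      rw [Finset.card_filter, Fintype.sum_prod_type]
      have : ∀ k1 : Fin m1, (∑ k2 : Fin (r * q1),
          if F1 i1 k1 + D k2 i2 = F1 j1 k1 + D k2 i2 then 1 else 0)
          = if F1 i1 k1 = F1 j1 k1 then (r * q1) else 0 := by
        intro k1
        by_cases hk : F1 i1 k1 = F1 j1 k1
        · simp [hk]
        · have : ∀ k2 : Fin (r * q1),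
              ¬ (F1 i1 k1 + D k2 i2 = F1 j1 k1 + D k2 i2) := by
            intro k2 hc
            exact hk (add_right_cancel hc)
          simp [this, hk]
      rw [Finset.sum_congr rfl (fun k1 _ => this k1), ← Finset.sum_filter,
        Finset.sum_const, hF1 i1 j1 hij, smul_eq_mul]
    omega
  · rw [if_neg h, hF2 i2 j2 h]
    have h1 : (Finset.univ.filter fun kk : Fin m1 × Fin (r * q1) =>
        F1 i1 kk.1 + D kk.2 i2 = F1 j1 kk.1 + D kk.2 j2).card = r * m1 := by
      rw [Finset.card_filter, Fintype.sum_prod_type]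
      have : ∀ k1 : Fin m1, (∑ k2 : Fin (r * q1),
          if F1 i1 k1 + D k2 i2 = F1 j1 k1 + D k2 j2 then 1 else 0) = r := by
        intro k1
        rw [← Finset.card_filter]
        rw [show (Finset.univ.filter fun k2 : Fin (r * q1) =>
            F1 i1 k1 + D k2 i2 = F1 j1 k1 + D k2 j2)
          = (Finset.univ.filter fun k2 : Fin (r * q1) =>
            D k2 i2 - D k2 j2 = F1 j1 k1 - F1 i1 k1) from
          Finset.filter_congr (fun k2 _ => by
            constructor
            · intro hc; linear_combination hc
            · intro hc; linear_combination hc)]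
        exact hD i2 j2 h (F1 j1 k1 - F1 i1 k1)
      rw [Finset.sum_congr rfl (fun k1 _ => this k1)]
      simp [mul_comm]
    omega
end
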